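/- Let B and C be categories and T a B-indexed monad on C, with Eilenberg–Moore category C^T and projection π₀ : C^T → B. Then the category ∏_B(π₀) of sections of π₀ is isomorphic to the following category: objects are families of T_b-algebras (χ_b : T_b c_b → c_b)_{b∈B} together with, for each u : b → b' in B, a T_b-algebra morphism h_u : (c_b, χ_b) → (c_{b'}, χ_{b'} ∘ T_{u,c_{b'}}) satisfying functoriality h_{id_b} = id and h_{u'∘u} = h_{u'} ∘ h_u; morphisms are families of T_b-algebra morphisms ψ_b : (c_b, χ_b) → (c'_b, χ'_b) natural with respect to the h's, i.e. h'_u ∘ ψ_b = ψ_{b'} ∘ h_u for all u : b → b'. -/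

import Mathlib

/-!
STATEMENT 16: Let `B` and `C` be categories and `T` a `B`-indexed monad on `C`
(a functor `J : B ⥤ Monad C`), with Eilenberg–Moore category `C^T` and projection
`π₀ : C^T ⥤ B`.  The category `∏_B(π₀)` of sections of `π₀` is isomorphic to the
category whose objects are families of `T_b`-algebras `(χ_b)_b` together with
`T_b`-algebra morphisms `h_u : (c_b, χ_b) → (c_{b'}, χ_{b'} ∘ T_{u})` for each
`u : b ⟶ b'`, functorial in `u`, and whose morphisms are families of
`T_b`-algebra morphisms commuting with the `h`'s.
-/

open CategoryTheory

universe u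

namespace Paper

variable {B C : Type u} [Category.{u} B] [Category.{u} C]

/-- Objects of the Eilenberg–Moore category `C^T` of an indexed monad. -/
structure IAlg (J : B ⥤ Monad C) where
  base : B
  alg : (J.obj base).Algebra

/-- Morphisms of the Eilenberg–Moore category `C^T` of an indexed monad. -/
structure IAlgHom {J : B ⥤ Monad C} (x y : IAlg J) where
  u : x.base ⟶ y.base
  h : x.alg.A ⟶ y.alg.A
  comm : x.alg.a ≫ h
      = (J.obj x.base).map h ≫ (J.map u).app y.alg.A ≫ y.alg.a

theorem IAlgHom.ext {J : B ⥤ Monad C} {x y : IAlg J} {f g : IAlgHom x y}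
    (h1 : f.u = g.u) (h2 : f.h = g.h) : f = g := by
  cases f; cases g; cases h1; cases h2; rfl

instance (J : B ⥤ Monad C) : Category (IAlg J) where
  Hom := IAlgHom
  id x := ⟨𝟙 x.base, 𝟙 x.alg.A, by simp⟩
  comp f g := ⟨f.u ≫ g.u, f.h ≫ g.h, by
    rw [reassoc_of% f.comm, g.comm, Functor.map_comp_assoc]
    simp only [Functor.map_comp]
    rw [← (J.map f.u).toNatTrans.naturality_assoc g.h]
    simp [NatTrans.comp_app]⟩
  id_comp f := IAlgHom.ext (by simp) (by simp)
  comp_id f := IAlgHom.ext (by simp) (by simp)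
  assoc f g h := IAlgHom.ext (by simp) (by simp)

/-- The projection `π₀ : C^T ⥤ B`. -/
def proj (J : B ⥤ Monad C) : IAlg J ⥤ B where
  obj x := x.base
  map f := f.u
  map_id _ := rfl
  map_comp _ _ := rfl

/-- The category of sections of `p : E ⥤ B`. -/
structure Sect {E : Type u} [Category.{u} E] (p : E ⥤ B) where
  s : B ⥤ E
  isSect : s ⋙ p = 𝟭 B

instance {E : Type u} [Category.{u} E] (p : E ⥤ B) : Category (Sect p) where
  Hom σ τ := { ψ : σ.s ⟶ τ.s // Functor.whiskerRight ψ p = eqToHom (σ.isSect.trans τ.isSect.symm) }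
  id σ := ⟨𝟙 σ.s, by rw [Functor.whiskerRight_id']; exact (eqToHom_refl _ _).symm⟩
  comp ψ φ := ⟨ψ.1 ≫ φ.1, by rw [Functor.whiskerRight_comp, ψ.2, φ.2, eqToHom_trans]⟩
  id_comp f := Subtype.ext (by simp)
  comp_id f := Subtype.ext (by simp)
  assoc f g h := Subtype.ext (by simp)

/-- Objects of the explicit description: families of algebras with functorial
connecting algebra morphisms. -/
structure SectData (J : B ⥤ Monad C) where
  alg : ∀ b : B, (J.obj b).Algebra
  conn : ∀ {b b' : B}, (b ⟶ b') → ((alg b).A ⟶ (alg b').A)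
  conn_comm : ∀ {b b' : B} (u : b ⟶ b'),
      (alg b).a ≫ conn u
        = (J.obj b).map (conn u) ≫ (J.map u).app (alg b').A ≫ (alg b').a
  conn_id : ∀ b : B, conn (𝟙 b) = 𝟙 (alg b).A
  conn_comp : ∀ {b₀ b₁ b₂ : B} (u : b₀ ⟶ b₁) (u' : b₁ ⟶ b₂),
      conn (u ≫ u') = conn u ≫ conn u'

/-- Morphisms of the explicit description: families of algebra morphisms
commuting with the connecting morphisms. -/
structure SectDataHom {J : B ⥤ Monad C} (x y : SectData J) where
  ψ : ∀ b : B, (x.alg b).A ⟶ (y.alg b).A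
  isAlgHom : ∀ b : B,
      (x.alg b).a ≫ ψ b = (J.obj b).map (ψ b) ≫ (y.alg b).a
  natural : ∀ {b b' : B} (u : b ⟶ b'),
      x.conn u ≫ ψ b' = ψ b ≫ y.conn u

theorem SectDataHom.ext {J : B ⥤ Monad C} {x y : SectData J}
    {f g : SectDataHom x y} (h1 : f.ψ = g.ψ) : f = g := by
  cases f; cases g; cases h1; rfl

instance (J : B ⥤ Monad C) : Category (SectData J) where
  Hom := SectDataHom
  id x := ⟨fun b => 𝟙 (x.alg b).A, by intro b; simp, by intro b b' u; simp⟩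
  comp f g := ⟨fun b => f.ψ b ≫ g.ψ b, by
    intro b
    rw [reassoc_of% f.isAlgHom b, g.isAlgHom b, Functor.map_comp_assoc], by
    intro b b' u
    rw [reassoc_of% f.natural u, g.natural u, Category.assoc]⟩
  id_comp f := SectDataHom.ext (by funext b; simp)
  comp_id f := SectDataHom.ext (by funext b; simp)
  assoc f g h := SectDataHom.ext (by funext b; simp)

-- AUX START
section Aux

variable {J : B ⥤ Monad C}

@[simp] theorem IAlg_comp_u {x y z : IAlg J} (f : x ⟶ y) (g : y ⟶ z) :
    (f ≫ g).u = f.u ≫ g.u := rfl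

@[simp] theorem IAlg_comp_h {x y z : IAlg J} (f : x ⟶ y) (g : y ⟶ z) :
    (f ≫ g).h = f.h ≫ g.h := rfl

@[simp] theorem IAlg_id_u (x : IAlg J) : (𝟙 x : IAlgHom x x).u = 𝟙 x.base := rfl

@[simp] theorem IAlg_id_h (x : IAlg J) : (𝟙 x : IAlgHom x x).h = 𝟙 x.alg.A := rfl

theorem algebra_ext {T : Monad C} {X Y : T.Algebra} (h1 : X.A = Y.A)
    (h2 : HEq X.a Y.a) : X = Y := by
  cases X; cases Y
  cases h1; cases h2; rfl

theorem ialg_ext {x y : IAlg J} (h1 : x.base = y.base) (h2 : HEq x.alg y.alg) :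
    x = y := by
  cases x; cases y; cases h1; cases h2; rfl

theorem IAlg_eqToHom_u {x y : IAlg J} (h : x = y) :
    (eqToHom h).u = eqToHom (congrArg IAlg.base h) := by subst h; rfl

theorem IAlg_eqToHom_h {x y : IAlg J} (h : x = y) :
    (eqToHom h).h = eqToHom (by rw [h]) := by subst h; rfl

/-- Transport an algebra along an equality of base objects. -/
def castAlg (J : B ⥤ Monad C) {b₀ b : B} (e : b₀ = b) (X : (J.obj b₀).Algebra) :
    (J.obj b).Algebra where
  A := X.A
  a := (J.map (eqToHom e.symm)).app X.A ≫ X.a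
  unit := by subst e; simp [X.unit]
  assoc := by
    subst e
    simp only [eqToHom_refl, CategoryTheory.Functor.map_id, MonadHom.id_toNatTrans,
      NatTrans.id_app, Category.id_comp]
    exact X.assoc

theorem castAlg_rfl (J : B ⥤ Monad C) {b : B} (X : (J.obj b).Algebra) :
    castAlg J rfl X = X :=
  algebra_ext rfl (heq_of_eq (by simp [castAlg]))

theorem castAlg_heq (J : B ⥤ Monad C) {b₀ b : B} (e : b₀ = b)
    (X : (J.obj b₀).Algebra) : HEq (castAlg J e X) X := by
  subst e; exact heq_of_eq (castAlg_rfl J X)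

theorem conn_comm_aux {b₀ b₁ b b' : B} (e : b₀ = b) (e' : b₁ = b')
    (X : (J.obj b₀).Algebra) (X' : (J.obj b₁).Algebra) (u : b ⟶ b')
    (h : X.A ⟶ X'.A)
    (comm : X.a ≫ h
      = (J.obj b₀).map h ≫ (J.map (eqToHom e ≫ u ≫ eqToHom e'.symm)).app X'.A ≫ X'.a) :
    (castAlg J e X).a ≫ h
      = (J.obj b).map h ≫ (J.map u).app X'.A ≫ (castAlg J e' X').a := by
  subst e; subst e'
  simp only [castAlg, eqToHom_refl, CategoryTheory.Functor.map_id, MonadHom.id_toNatTrans,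
    NatTrans.id_app, Category.id_comp, Category.comp_id] at comm ⊢
  exact comm

theorem isAlgHom_aux {b₀ b₁ b : B} (e : b₀ = b) (e' : b₁ = b)
    (X : (J.obj b₀).Algebra) (Y : (J.obj b₁).Algebra) (h : X.A ⟶ Y.A)
    (comm : X.a ≫ h
      = (J.obj b₀).map h ≫ (J.map (eqToHom (e.trans e'.symm))).app Y.A ≫ Y.a) :
    (castAlg J e X).a ≫ h = (J.obj b).map h ≫ (castAlg J e' Y).a := by
  subst e; subst e'
  simp only [castAlg, eqToHom_refl, CategoryTheory.Functor.map_id, MonadHom.id_toNatTrans,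
    NatTrans.id_app, Category.id_comp, Category.comp_id] at comm ⊢
  exact comm

theorem sect_ext {E : Type u} [Category.{u} E] {p : E ⥤ B} {σ τ : Sect p}
    (h : σ.s = τ.s) : σ = τ := by
  cases σ; cases τ; cases h; rfl

theorem sectData_ext {x y : SectData J} (h1 : x.alg = y.alg)
    (h2 : ∀ {b b' : B} (u : b ⟶ b'), HEq (x.conn u) (y.conn u)) : x = y := by
  cases x; cases y
  cases h1
  have : ∀ {b b' : B} (u : b ⟶ b'), _ := fun {b b'} u => eq_of_heq (h2 u)
  congr 1
  funext b b' u
  exact eq_of_heq (h2 u)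

theorem SectData_eqToHom_ψ {x y : SectData J} (h : x = y) (b : B) :
    (eqToHom h).ψ b = eqToHom (by rw [h]) := by subst h; rfl

theorem Sect_eqToHom_app {E : Type u} [Category.{u} E] {p : E ⥤ B} {σ τ : Sect p}
    (h : σ = τ) (b : B) : (eqToHom h).1.app b = eqToHom (by rw [h]) := by
  subst h; rfl

@[simp] theorem Sect_comp_val {E : Type u} [Category.{u} E] {p : E ⥤ B}
    {σ τ ρ : Sect p} (f : σ ⟶ τ) (g : τ ⟶ ρ) : (f ≫ g).1 = f.1 ≫ g.1 := rfl

@[simp] theorem SectData_comp_ψ {x y z : SectData J} (f : x ⟶ y) (g : y ⟶ z) (b : B) :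
    (f ≫ g).ψ b = f.ψ b ≫ g.ψ b := rfl

end Aux
-- AUX END

section Main

variable {J : B ⥤ Monad C}

/-- base equality for a section. -/
theorem eb (σ : Sect (proj J)) (b : B) : (σ.s.obj b).base = b :=
  Functor.congr_obj σ.isSect b

theorem sect_map_u (σ : Sect (proj J)) {b b' : B} (u : b ⟶ b') :
    (σ.s.map u).u = eqToHom (eb σ b) ≫ u ≫ eqToHom (eb σ b').symm := by
  have := Functor.congr_hom σ.isSect u
  simp at this; exact this

theorem sect_hom_u {σ τ : Sect (proj J)} (ψ : σ ⟶ τ) (b : B) :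
    (ψ.1.app b).u = eqToHom ((eb σ b).trans (eb τ b).symm) := by
  have := congrArg (fun (n : σ.s ⋙ proj J ⟶ τ.s ⋙ proj J) => n.app b) ψ.2
  simp [eqToHom_app] at this; exact this

/-- The functor from sections to the explicit description. -/
def toData (J : B ⥤ Monad C) : Sect (proj J) ⥤ SectData J where
  obj σ :=
    { alg := fun b => castAlg J (eb σ b) (σ.s.obj b).alg
      conn := fun u => (σ.s.map u).h
      conn_comm := fun {b b'} u =>
        conn_comm_aux (eb σ b) (eb σ b') _ _ u _ (by
          rw [← sect_map_u σ u]; exact (σ.s.map u).comm)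
      conn_id := fun b => congrArg IAlgHom.h (σ.s.map_id b)
      conn_comp := fun u u' => congrArg IAlgHom.h (σ.s.map_comp u u') }
  map {σ τ} ψ :=
    { ψ := fun b => (ψ.1.app b).h
      isAlgHom := fun b =>
        isAlgHom_aux (eb σ b) (eb τ b) _ _ _ (by
          rw [← sect_hom_u ψ b]; exact (ψ.1.app b).comm)
      natural := fun u => congrArg IAlgHom.h (ψ.1.naturality u) }
  map_id σ := SectDataHom.ext rfl
  map_comp f g := SectDataHom.ext rfl

/-- The functor from the explicit description to sections. -/
def ofData (J : B ⥤ Monad C) : SectData J ⥤ Sect (proj J) where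
  obj x :=
    { s :=
        { obj := fun b => ⟨b, x.alg b⟩
          map := fun u => ⟨u, x.conn u, x.conn_comm u⟩
          map_id := fun b => IAlgHom.ext rfl (x.conn_id b)
          map_comp := fun u u' => IAlgHom.ext rfl (x.conn_comp u u') }
      isSect := rfl }
  map {x y} f :=
    ⟨{ app := fun b => ⟨𝟙 b, f.ψ b, by simpa using f.isAlgHom b⟩
       naturality := fun b b' u => IAlgHom.ext (by simp) (by simpa using f.natural u) },
     by
      apply NatTrans.ext; funext b
      simp [eqToHom_app, proj, Functor.whiskerRight]
      erw [eqToHom_app]; exact (eqToHom_refl _ _).symm⟩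
  map_id x := Subtype.ext (by apply NatTrans.ext; funext b; exact IAlgHom.ext rfl rfl)
  map_comp f g := Subtype.ext (by
    apply NatTrans.ext; funext b; exact IAlgHom.ext (by simp) rfl)

end Main

section Round

variable {J : B ⥤ Monad C}

theorem roundtrip1 (σ : Sect (proj J)) : (ofData J).obj ((toData J).obj σ) = σ := by
  refine sect_ext (CategoryTheory.Functor.ext
    (fun b => ialg_ext (eb σ b).symm ((castAlg_heq J (eb σ b) _))) ?_)
  intro b b' u
  apply IAlgHom.ext
  · simp only [IAlg_comp_u, IAlg_eqToHom_u, sect_map_u σ u]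
    simp [eqToHom_trans]
    simp [ofData]; erw [eqToHom_refl, eqToHom_refl]; simp
  · simp only [IAlg_comp_h, IAlg_eqToHom_h]
    have h : (σ.s.map u).h = 𝟙 _ ≫ (σ.s.map u).h ≫ 𝟙 _ := by simp
    exact h

theorem roundtrip1_map {σ τ : Sect (proj J)} (ψ : σ ⟶ τ) :
    (toData J ⋙ ofData J).map ψ
      = eqToHom (roundtrip1 σ) ≫ ψ ≫ eqToHom (roundtrip1 τ).symm := by
  apply Subtype.ext
  apply NatTrans.ext; funext b
  simp only [Sect_comp_val, NatTrans.comp_app, Sect_eqToHom_app]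
  apply IAlgHom.ext
  · simp only [IAlg_comp_u, IAlg_eqToHom_u, sect_hom_u ψ b]
    simp [eqToHom_trans]
    rfl
  · simp only [IAlg_comp_h, IAlg_eqToHom_h]
    have h : (ψ.1.app b).h = 𝟙 _ ≫ (ψ.1.app b).h ≫ 𝟙 _ := by simp
    exact h

theorem roundtrip2 (x : SectData J) : (toData J).obj ((ofData J).obj x) = x := by
  refine sectData_ext ?_ ?_
  · funext b
    exact castAlg_rfl J (x.alg b)
  · intro b b' u
    exact HEq.rfl

theorem roundtrip2_map {x y : SectData J} (f : x ⟶ y) :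
    (ofData J ⋙ toData J).map f
      = eqToHom (roundtrip2 x) ≫ f ≫ eqToHom (roundtrip2 y).symm := by
  apply SectDataHom.ext
  funext b
  simp only [SectData_comp_ψ, SectData_eqToHom_ψ]
  have h : f.ψ b = 𝟙 _ ≫ f.ψ b ≫ 𝟙 _ := by simp
  exact h

end Round

/-- the category of sections of `π₀ : C^T ⥤ B` is isomorphic to the
explicitly described category of compatible families of algebras. -/
theorem statement16 (J : B ⥤ Monad C) :
    Nonempty (Cat.of (Sect (proj J)) ≅ Cat.of (SectData J)) := by
  refine ⟨⟨(toData J).toCatHom, (ofData J).toCatHom, ?_, ?_⟩⟩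
  · exact Cat.ext (CategoryTheory.Functor.ext roundtrip1 (fun σ τ ψ => roundtrip1_map ψ))
  · exact Cat.ext (CategoryTheory.Functor.ext roundtrip2 (fun x y f => roundtrip2_map f))

end Paper
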